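/- arXiv:2307.08113 — 3 statements merged into one kernel-verified Lean document; each statement's English description precedes it below -/
import Mathlib

section
/- Let G be a connected simple graph on at least three vertices and v a target vertex. If a configuration C places exactly two pebbles on v and no sequence of pebbling moves from C yields exactly one pebble on v, then there exists a configuration C' with at least as many pebbles as C, placing zero pebbles on v, such that no sequence of pebbling moves from C' yields a pebble on v. -/
open Classical

/-- A single pebbling move on a simple graph G: remove two pebbles from a
vertex u having at least two pebbles and add one pebble to an adjacent
vertex w. -/
def PebblingMove {V : Type*} (G : SimpleGraph V) (C C' : V → ℕ) : Prop :=
  ∃ u w : V, G.Adj u w ∧ 2 ≤ C u ∧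
    C' = fun x => if x = u then C u - 2 else if x = w then C w + 1 else C x

/-- Reaches G C C' : configuration C' is obtainable from C by a
(possibly empty) sequence of pebbling moves. -/
def Reaches {V : Type*} (G : SimpleGraph V) : (V → ℕ) → (V → ℕ) → Prop :=
  Relation.ReflTransGen (PebblingMove G)

/-- Making a pebbling move explicitly. -/
lemma pebbling_move_mk {V : Type*} (G : SimpleGraph V) {D : V → ℕ} {u w : V}
    (h : G.Adj u w) (h2 : 2 ≤ D u) :
    PebblingMove G D (fun x => if x = u then D u - 2 else if x = w then D w + 1 else D x) :=
  ⟨u, w, h, h2, rfl⟩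

/-- Reachability is preserved by adding extra pebbles pointwise. -/
lemma reaches_add_right {V : Type*} (G : SimpleGraph V) {C D : V → ℕ}
    (h : Reaches G C D) (A : V → ℕ) :
    Reaches G (fun t => C t + A t) (fun t => D t + A t) := by
  induction h with
  | refl => exact Relation.ReflTransGen.refl
  | tail hre0 hstep ih =>
    rename_i Dm Df
    obtain ⟨u, w, hadj, hu2, hEq⟩ := hstep
    have huw : u ≠ w := hadj.ne
    refine ih.tail ⟨u, w, hadj, le_trans hu2 (Nat.le_add_right _ _), ?_⟩
    subst hEq
    funext t
    dsimp only
    by_cases ht : t = u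
    · subst ht; rw [if_pos rfl, if_pos rfl]; omega
    · rw [if_neg ht, if_neg ht]
      by_cases ht2 : t = w
      · subst ht2; rw [if_pos rfl, if_pos rfl]; omega
      · rw [if_neg ht2, if_neg ht2]

/-- The key structural lemma: under `hblock`, every reachable configuration
either has two pebbles on `v` and none on its neighbors, or none on `v` and
at most one on each neighbor. -/
lemma pebbling_keyP {V : Type*} (G : SimpleGraph V) (C : V → ℕ) (v : V)
    (h2 : C v = 2)
    (hblock : ¬ ∃ C', Reaches G C C' ∧ C' v = 1) :
    ∀ D, Reaches G C D →
      (D v = 2 ∧ ∀ w, G.Adj v w → D w = 0) ∨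
      (D v = 0 ∧ ∀ w, G.Adj v w → D w ≤ 1) := by
  have contra : ∀ D', Reaches G C D' → ∀ D'', Reaches G D' D'' → D'' v = 1 → False :=
    fun D' hh1 D'' hh2 hh3 => hblock ⟨D'', hh1.trans hh2, hh3⟩
  intro D hD
  induction hD with
  | refl =>
    left
    refine ⟨h2, fun w hw => ?_⟩
    by_contra hCw
    have hwv : w ≠ v := fun h => (G.irrefl (h ▸ hw))
    have hCw1 : 1 ≤ C w := by omega
    -- fire v → w, then w → v, reaching one pebble on v
    set D1 : V → ℕ := fun x => if x = v then C v - 2 else if x = w then C w + 1 else C x with hD1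
    have m1 : PebblingMove G C D1 := pebbling_move_mk G hw (by omega)
    have hD1w : D1 w = C w + 1 := by simp [hD1, hwv]
    have hD1v : D1 v = 0 := by simp [hD1, h2]
    set D2 : V → ℕ := fun x => if x = w then D1 w - 2 else if x = v then D1 v + 1 else D1 x with hD2
    have m2 : PebblingMove G D1 D2 := pebbling_move_mk G hw.symm (by omega)
    have hD2v : D2 v = 1 := by simp [hD2, (Ne.symm hwv : v ≠ w), hD1v]
    exact contra C Relation.ReflTransGen.refl D2
      (Relation.ReflTransGen.head m1 (Relation.ReflTransGen.single m2)) hD2v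
  | tail hre hstep ih =>
    rename_i Dm Df
    obtain ⟨u, y, hadj, hu2, hEq⟩ := hstep
    have hreC : Reaches G C Dm := hre
    have hreC' : Reaches G C Df := hreC.tail ⟨u, y, hadj, hu2, hEq⟩
    have huy : u ≠ y := hadj.ne
    rcases ih with ⟨hDv, hDw⟩ | ⟨hDv, hDw⟩
    · -- case I : Dm v = 2, neighbors 0
      by_cases hu : u = v
      · subst hu
        right
        have hyv : y ≠ u := fun h => (G.irrefl (h ▸ hadj))
        constructor
        · rw [hEq]; simp [hDv]
        · intro w hw
          have hwu : w ≠ u := fun h => (G.irrefl (h ▸ hw))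
          rw [hEq]
          by_cases hwy : w = y
          · subst hwy; simp [hwu, hDw w hw]
          · simp [hwu, hwy, hDw w hw]
      · have hunadj : ¬ G.Adj v u := fun h => by have := hDw u h; omega
        by_cases hyv : y = v
        · subst hyv
          exact absurd (hadj.symm) hunadj
        · by_cases hy : G.Adj v y
          · -- refute : Df v = 2, Df y = 1 ; fire v→y then y→v
            exfalso
            have hvu : v ≠ u := Ne.symm hu
            have hDfv : Df v = 2 := by rw [hEq]; simp [hvu, Ne.symm hyv, hDv]
            have hyu : y ≠ u := Ne.symm huy
            have hDfy : Df y = 1 := by rw [hEq]; simp [hyu, hDw y hy]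
            set E1 : V → ℕ := fun x => if x = v then Df v - 2 else if x = y then Df y + 1 else Df x with hE1
            have m1 : PebblingMove G Df E1 := pebbling_move_mk G hy (by omega)
            have hE1y : E1 y = 2 := by simp [hE1, hyv, hDfy]
            have hE1v : E1 v = 0 := by simp [hE1, hDfv]
            set E2 : V → ℕ := fun x => if x = y then E1 y - 2 else if x = v then E1 v + 1 else E1 x with hE2
            have m2 : PebblingMove G E1 E2 := pebbling_move_mk G hy.symm (by omega)
            have hE2v : E2 v = 1 := by simp [hE2, Ne.symm hyv, hE1v]
            exact contra Df hreC' E2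
              (Relation.ReflTransGen.head m1 (Relation.ReflTransGen.single m2)) hE2v
          · left
            have hvu : v ≠ u := Ne.symm hu
            constructor
            · rw [hEq]; simp [hvu, Ne.symm hyv, hDv]
            · intro w hw
              have hwu : w ≠ u := fun h => hunadj (h ▸ hw)
              have hwy : w ≠ y := fun h => hy (h ▸ hw)
              rw [hEq]; simp [hwu, hwy, hDw w hw]
    · -- case II : Dm v = 0, neighbors ≤ 1
      have hu : u ≠ v := fun h => by rw [h] at hu2; omega
      have hunadj : ¬ G.Adj v u := fun h => by have := hDw u h; omega
      by_cases hyv : y = v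
      · subst hyv
        exact absurd hadj.symm hunadj
      · by_cases hy : G.Adj v y
        · have hyu : y ≠ u := Ne.symm huy
          have hDy := hDw y hy
          by_cases hDy1 : Dm y = 1
          · -- refute : Df y = 2, fire y → v
            exfalso
            have hDfy : Df y = 2 := by rw [hEq]; simp [hyu, hDy1]
            have hDfv : Df v = 0 := by rw [hEq]; simp [Ne.symm hu, Ne.symm hyv, hDv]
            set E1 : V → ℕ := fun x => if x = y then Df y - 2 else if x = v then Df v + 1 else Df x with hE1
            have m1 : PebblingMove G Df E1 := pebbling_move_mk G hy.symm (by omega)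
            have hE1v : E1 v = 1 := by simp [hE1, Ne.symm hyv, hDfv]
            exact contra Df hreC' E1 (Relation.ReflTransGen.single m1) hE1v
          · right
            constructor
            · rw [hEq]; simp [Ne.symm hu, Ne.symm hyv, hDv]
            · intro w hw
              have hwu : w ≠ u := fun h => hunadj (h ▸ hw)
              rw [hEq]
              by_cases hwy : w = y
              · subst hwy; simp [hwu]; omega
              · simp [hwu, hwy, hDw w hw]
        · right
          constructor
          · rw [hEq]; simp [Ne.symm hu, Ne.symm hyv, hDv]
          · intro w hw
            have hwu : w ≠ u := fun h => hunadj (h ▸ hw)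
            have hwy : w ≠ y := fun h => hy (h ▸ hw)
            rw [hEq]; simp [hwu, hwy, hDw w hw]

/-- From `C₀` (which is `C` with `v` emptied), no reachable configuration
ever has a pebble on `v` or on a neighbor of `v`. -/
lemma pebbling_blocked0 {V : Type*} (G : SimpleGraph V) (C : V → ℕ) (v : V)
    (h2 : C v = 2)
    (hblock : ¬ ∃ C', Reaches G C C' ∧ C' v = 1) :
    ∀ E, Reaches G (fun t => if t = v then 0 else C t) E →
      E v = 0 ∧ ∀ w, G.Adj v w → E w = 0 := by
  intro E hE
  have hlift := reaches_add_right G hE (fun t => if t = v then 2 else 0)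
  have hCeq : (fun t => (if t = v then 0 else C t) + (if t = v then 2 else 0)) = C := by
    funext t
    by_cases ht : t = v
    · subst ht; simp [h2]
    · simp [ht]
  rw [hCeq] at hlift
  have hP := pebbling_keyP G C v h2 hblock _ hlift
  rcases hP with ⟨hv, hw⟩ | ⟨hv, _⟩
  · constructor
    · have hv' : E v + (if (v : V) = v then 2 else 0) = 2 := hv
      rw [if_pos rfl] at hv'; omega
    · intro w hadj
      have hwv : w ≠ v := fun h => (G.irrefl (h ▸ hadj))
      have ht' : E w + (if w = v then 2 else 0) = 0 := hw w hadj
      rw [if_neg hwv] at ht'; omega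
  · have hv' : E v + (if (v : V) = v then 2 else 0) = 0 := hv
    rw [if_pos rfl] at hv'; omega

theorem stmt9 {V : Type*} [Fintype V] (G : SimpleGraph V)
    (hconn : G.Connected) (hcard : 3 ≤ Fintype.card V)
    (C : V → ℕ) (v : V) (h2 : C v = 2)
    (hblock : ¬ ∃ C', Reaches G C C' ∧ C' v = 1) :
    ∃ C' : V → ℕ, (∑ x, C x) ≤ ∑ x, C' x ∧ C' v = 0 ∧
      ¬ ∃ C'', Reaches G C' C'' ∧ 1 ≤ C'' v := by
  classical
  set C₀ : V → ℕ := fun t => if t = v then 0 else C t with hC₀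
  have hB := pebbling_blocked0 G C v h2 hblock
  by_cases hx : ∃ x : V, x ≠ v ∧ ¬ G.Adj v x
  · -- Case 1 : some non-neighbor x of v exists; put the two pebbles on x
    obtain ⟨x, hxv, hxadj⟩ := hx
    refine ⟨fun t => if t = v then 0 else if t = x then C t + 2 else C t, ?_, by simp, ?_⟩
    · -- sum comparison
      have hpt : ∀ t : V,
          (if t = v then 0 else if t = x then C t + 2 else C t) + (if t = v then 2 else 0)
            = C t + (if t = x then 2 else 0) := by
        intro t
        by_cases ht : t = v
        · subst ht; simp [Ne.symm hxv, h2]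
        · by_cases ht2 : t = x <;> simp [ht, ht2, hxv]
      have hsum := Finset.sum_congr rfl (fun t (_ : t ∈ Finset.univ) => hpt t)
      rw [Finset.sum_add_distrib, Finset.sum_add_distrib] at hsum
      simp only [Finset.sum_ite_eq', Finset.mem_univ, if_pos] at hsum
      have hkey : (∑ t : V, (if t = v then 0 else if t = x then C t + 2 else C t))
          = ∑ t : V, C t := by omega
      exact le_of_eq hkey.symm
    · -- blockedness via the ghost invariant
      rintro ⟨E'', hre, hv1⟩
      have hInv : ∀ E', Reaches G (fun t => if t = v then 0 else if t = x then C t + 2 else C t) E' →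
          ∃ E₀, Reaches G C₀ E₀ ∧
            ((∀ t, E' t ≤ E₀ t + (if t = x then 2 else 0)) ∨
             ∃ c, c ≠ v ∧ ∀ t, E' t ≤ E₀ t + (if t = c then 1 else 0)) := by
        intro E' hE'
        induction hE' with
        | refl =>
          refine ⟨C₀, Relation.ReflTransGen.refl, Or.inl fun t => ?_⟩
          by_cases ht : t = v
          · subst ht; simp [hC₀, Ne.symm hxv]
          · by_cases ht2 : t = x <;> simp [hC₀, ht, ht2, hxv]
        | tail hre2 hstep ih =>
          rename_i Em Ef
          obtain ⟨z, y, hadj, hz2, hEq⟩ := hstep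
          subst hEq
          have hzy : z ≠ y := hadj.ne
          obtain ⟨E₀, hreE₀, hAB⟩ := ih
          obtain ⟨hE₀v, hE₀nb⟩ := hB E₀ hreE₀
          rcases hAB with hA | ⟨c, hcv, hBnd⟩
          · -- form A : two ghosts at x
            have hAx : Em x ≤ E₀ x + 2 := by simpa using hA x
            have hAo : ∀ t, t ≠ x → Em t ≤ E₀ t := fun t ht => by simpa [ht] using hA t
            by_cases hzx : z = x
            · -- the pair fires : go to form B with a ghost at y
              have hyv : y ≠ v := by
                intro h
                apply hxadj
                rw [← hzx, ← h]
                exact hadj.symm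
              refine ⟨E₀, hreE₀, Or.inr ⟨y, hyv, fun t => ?_⟩⟩
              dsimp only
              by_cases ht : t = z
              · subst ht
                have hx2 : Em t ≤ E₀ t + 2 := hzx ▸ hAx
                simp [hzy]
                omega
              · by_cases ht2 : t = y
                · subst ht2
                  have hto : Em t ≤ E₀ t := hAo t (fun h => ht (h.trans hzx.symm))
                  simp [ht]
                  omega
                · have hto : Em t ≤ E₀ t := hAo t (fun h => ht (h.trans hzx.symm))
                  simp [ht, ht2]
                  omega
            · -- z ≠ x : the base configuration must fire; mirror the move
              have hE₀z : 2 ≤ E₀ z := le_trans hz2 (hAo z hzx)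
              have hznb : ¬ G.Adj v z := fun h => by
                have := hE₀nb z h; omega
              have hyv : y ≠ v := fun h => hznb ((h ▸ hadj).symm)
              refine ⟨fun t => if t = z then E₀ z - 2 else if t = y then E₀ y + 1 else E₀ t,
                hreE₀.tail (pebbling_move_mk G hadj hE₀z), Or.inl fun t => ?_⟩
              dsimp only
              by_cases ht : t = z
              · subst ht
                have hto : Em t ≤ E₀ t := hAo t hzx
                simp [hzx]
                omega
              · by_cases ht2 : t = y
                · subst ht2
                  have h1 := hA t
                  simp [ht]
                  by_cases htx : t = x <;> simp [htx] at h1 ⊢ <;> omega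
                · have h1 := hA t
                  simp [ht, ht2]
                  by_cases htx : t = x <;> simp [htx] at h1 ⊢ <;> omega
          · -- form B : a single ghost at c (c ≠ v)
            have hBc : Em c ≤ E₀ c + 1 := by simpa using hBnd c
            have hBo : ∀ t, t ≠ c → Em t ≤ E₀ t := fun t ht => by simpa [ht] using hBnd t
            by_cases hE₀z : 2 ≤ E₀ z
            · -- mirror the move
              have hznb : ¬ G.Adj v z := fun h => by
                have := hE₀nb z h; omega
              have hyv : y ≠ v := fun h => hznb ((h ▸ hadj).symm)
              refine ⟨fun t => if t = z then E₀ z - 2 else if t = y then E₀ y + 1 else E₀ t,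
                hreE₀.tail (pebbling_move_mk G hadj hE₀z), Or.inr ⟨c, hcv, fun t => ?_⟩⟩
              dsimp only
              by_cases ht : t = z
              · subst ht
                have h1 := hBnd t
                simp only [if_pos rfl]
                by_cases htc : t = c <;> simp [htc] at h1 ⊢ <;> omega
              · by_cases ht2 : t = y
                · subst ht2
                  have h1 := hBnd t
                  simp [ht]
                  by_cases htc : t = c <;> simp [htc] at h1 ⊢ <;> omega
                · have h1 := hBnd t
                  simp [ht, ht2]
                  by_cases htc : t = c <;> simp [htc] at h1 ⊢ <;> omega
            · -- the ghost itself fires : z = c, ghost moves to y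
              push_neg at hE₀z
              have hzc : z = c := by
                by_contra h
                have := hBo z h
                omega
              have hznb : ¬ G.Adj v z := fun h => by
                have h0 := hE₀nb z h
                have h1 := hBc
                rw [← hzc] at h1
                omega
              have hyv : y ≠ v := fun h => hznb ((h ▸ hadj).symm)
              refine ⟨E₀, hreE₀, Or.inr ⟨y, hyv, fun t => ?_⟩⟩
              dsimp only
              by_cases ht : t = z
              · subst ht
                have h1 : Em t ≤ E₀ t + 1 := hzc ▸ hBc
                simp [hzy]
                omega
              · by_cases ht2 : t = y
                · subst ht2
                  have h1 : Em t ≤ E₀ t := hBo t (fun h => ht (h.trans hzc.symm))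
                  simp [ht]
                  omega
                · have h1 : Em t ≤ E₀ t := hBo t (fun h => ht (h.trans hzc.symm))
                  simp [ht, ht2]
                  omega
      obtain ⟨E₀, hreE₀, hAB⟩ := hInv E'' hre
      obtain ⟨hE₀v, _⟩ := hB E₀ hreE₀
      rcases hAB with hA | ⟨c, hcv, hBnd⟩
      · have := hA v
        simp [Ne.symm hxv, hE₀v] at this
        omega
      · have h1 := hBnd v
        have hvc : (v : V) ≠ c := fun h => hcv h.symm
        simp [hvc, hE₀v] at h1
        omega
  · -- Case 2 : every other vertex is adjacent to v; all of them carry 0 pebbles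
    push_neg at hx
    have hall : ∀ t : V, t ≠ v → G.Adj v t := hx
    have hC0 : ∀ t : V, t ≠ v → C t = 0 := by
      intro t ht
      have hP := pebbling_keyP G C v h2 hblock C Relation.ReflTransGen.refl
      rcases hP with ⟨_, hw⟩ | ⟨hv, _⟩
      · exact hw t (hall t ht)
      · omega
    -- pick two distinct vertices different from v
    have hcard2 : 1 < (Finset.univ.erase v).card := by
      rw [Finset.card_erase_of_mem (Finset.mem_univ v)]
      have hcc : Finset.univ.card = Fintype.card V := rfl
      omega
    obtain ⟨a, ha, b, hb, hab⟩ := Finset.one_lt_card.mp hcard2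
    have hav : a ≠ v := (Finset.mem_erase.mp ha).1
    have hbv : b ≠ v := (Finset.mem_erase.mp hb).1
    refine ⟨fun t => if t = a then 1 else if t = b then 1 else 0, ?_, by simp [Ne.symm hav, Ne.symm hbv], ?_⟩
    · -- ∑ C = 2 ≤ 2 = ∑ C'
      have hCsum : ∑ t : V, C t = 2 := by
        have hfe : C = fun t => if t = v then 2 else 0 := by
          funext t
          by_cases ht : t = v
          · subst ht; simpa using h2
          · simp [ht, hC0 t ht]
        rw [hfe]
        simp
      have hC'sum : (∑ t : V, (if t = a then 1 else if t = b then 1 else 0)) = 2 := by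
        have hpt : (fun t : V => if t = a then 1 else if t = b then 1 else 0)
            = fun t : V => (if t = a then 1 else 0) + (if t = b then 1 else 0) := by
          funext t
          by_cases ht : t = a
          · subst ht; simp [hab]
          · by_cases ht2 : t = b <;> simp [ht, ht2, Ne.symm hab]
        rw [hpt, Finset.sum_add_distrib]
        simp
      rw [hCsum]
      exact le_of_eq hC'sum.symm
    · -- no moves are possible at all
      rintro ⟨E'', hre, hv1⟩
      have hfix : ∀ E, Reaches G (fun t => if t = a then 1 else if t = b then 1 else 0) E →
          E = fun t => if t = a then 1 else if t = b then 1 else 0 := by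
        intro E hE
        induction hE with
        | refl => rfl
        | tail _ hstep ih =>
          obtain ⟨u, w, _, hu2, _⟩ := hstep
          rw [ih] at hu2
          by_cases hu : u = a
          · simp [hu] at hu2
          · by_cases hu2' : u = b <;> simp [hu, hu2'] at hu2
      rw [hfix E'' hre] at hv1
      simp [Ne.symm hav, Ne.symm hbv] at hv1
end

section
/- For every simple graph G on at least three vertices, the singular pebbling number of G equals the pebbling number of G. -/
open Classical

/-- The pebbling number of G as an extended natural number. -/
noncomputable def pebblingNumber {V : Type*} [Fintype V] (G : SimpleGraph V) : ℕ∞ :=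
  sInf ((↑) '' {t : ℕ | ∀ C : V → ℕ, t ≤ ∑ x, C x → ∀ v : V,
    ∃ C', Reaches G C C' ∧ 1 ≤ C' v})

/-- The singular pebbling number of G as an extended natural number. -/
noncomputable def singularPebblingNumber {V : Type*} [Fintype V] (G : SimpleGraph V) : ℕ∞ :=
  sInf ((↑) '' {t : ℕ | ∀ C : V → ℕ, t ≤ ∑ x, C x → ∀ v : V,
    ∃ C', Reaches G C C' ∧ C' v = 1})

namespace SingularAux

variable {V : Type*}

/-- The result of a single pebbling move from `u` to `w`. -/
noncomputable def mv (C : V → ℕ) (u w : V) : V → ℕ :=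
  fun x => if x = u then C u - 2 else if x = w then C w + 1 else C x

lemma mv_apply (C : V → ℕ) (u w z : V) :
    mv C u w z = if z = u then C u - 2 else if z = w then C w + 1 else C z := rfl

lemma mv_move (G : SimpleGraph V) {C : V → ℕ} {u w : V} (ha : G.Adj u w)
    (h2 : 2 ≤ C u) : PebblingMove G C (mv C u w) :=
  ⟨u, w, ha, h2, rfl⟩

lemma frozen {G : SimpleGraph V} {C E : V → ℕ} (h : Reaches G C E)
    (hC : ∀ u, C u ≤ 1) : E = C := by
  rcases Relation.ReflTransGen.cases_head h with h1 | ⟨c, hm, _⟩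
  · exact h1.symm
  · obtain ⟨u, w, ha, h2, rfl⟩ := hm
    exact absurd h2 (by have := hC u; omega)

lemma iso {G : SimpleGraph V} {v : V} (hv : ∀ w, ¬ G.Adj v w)
    {C E : V → ℕ} (h : Reaches G C E) : E v = C v := by
  induction h with
  | refl => rfl
  | tail _ hm ih =>
    obtain ⟨u, w, ha, h2, rfl⟩ := hm
    have hvu : v ≠ u := fun h => hv w (h ▸ ha)
    have hvw : v ≠ w := fun h => hv u (h ▸ ha.symm)
    simpa [hvu, hvw] using ih

lemma move_v_cases {G : SimpleGraph V} {A B : V → ℕ} (hm : PebblingMove G A B) (v : V) :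
    B v = A v ∨ B v = A v + 1 ∨ (2 ≤ A v ∧ B v = A v - 2) := by
  obtain ⟨u, w, ha, h2, rfl⟩ := hm
  have huw : u ≠ w := ha.ne
  by_cases hvu : v = u
  · subst hvu
    exact Or.inr (Or.inr ⟨h2, by simp⟩)
  · by_cases hvw : v = w
    · subst hvw
      exact Or.inr (Or.inl (by simp [Ne.symm huw, hvu]))
    · exact Or.inl (by simp [hvu, hvw])

lemma first_arrival {G : SimpleGraph V} {v : V} {C E : V → ℕ}
    (h : Reaches G C E) (h1 : 1 ≤ E v) (h0 : C v = 0) :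
    ∃ F, Reaches G C F ∧ F v = 1 := by
  revert h0
  induction h using Relation.ReflTransGen.head_induction_on with
  | refl => intro h0; omega
  | head hm hrest ih =>
    intro h0
    rcases move_v_cases hm v with he | he | he
    · obtain ⟨F, hF, hF1⟩ := ih (by omega)
      exact ⟨F, Relation.ReflTransGen.head hm hF, hF1⟩
    · exact ⟨_, Relation.ReflTransGen.single hm, by omega⟩
    · omega

lemma finish_odd {G : SimpleGraph V} {v w : V} (hvw : G.Adj v w) :
    ∀ (k : ℕ) (C : V → ℕ), C v = 2 * k + 1 → ∃ F, Reaches G C F ∧ F v = 1 := by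
  intro k
  induction k with
  | zero => exact fun C h => ⟨C, Relation.ReflTransGen.refl, by omega⟩
  | succ n ih =>
    intro C h
    have hm : PebblingMove G C (mv C v w) := mv_move G hvw (by omega)
    have hval : (mv C v w) v = 2 * n + 1 := by simp [mv_apply]; omega
    obtain ⟨F, hF, hF1⟩ := ih (mv C v w) hval
    exact ⟨F, Relation.ReflTransGen.head hm hF, hF1⟩

lemma finish_two {G : SimpleGraph V} {v w : V} (hvw : G.Adj v w) {C : V → ℕ}
    (h2 : C v = 2) (hw : 1 ≤ C w) : ∃ F, Reaches G C F ∧ F v = 1 := by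
  have hne : w ≠ v := hvw.ne'
  have hm1 : PebblingMove G C (mv C v w) := mv_move G hvw (by omega)
  have hw2 : 2 ≤ (mv C v w) w := by simp [mv_apply, hne]; omega
  have hm2 : PebblingMove G (mv C v w) (mv (mv C v w) w v) := mv_move G hvw.symm hw2
  refine ⟨mv (mv C v w) w v, (Relation.ReflTransGen.single hm1).tail hm2, ?_⟩
  simp [mv_apply, hne, hne.symm, h2]

lemma finish_ge {G : SimpleGraph V} {v w : V} (hvw : G.Adj v w) :
    ∀ (n : ℕ) (C : V → ℕ), C v = n → 3 ≤ n → ∃ F, Reaches G C F ∧ F v = 1 := by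
  intro n
  induction n using Nat.strong_induction_on with
  | _ n ih =>
    intro C hn h3
    have hne : w ≠ v := hvw.ne'
    by_cases he3 : n = 3
    · exact finish_odd hvw 1 C (by omega)
    by_cases he4 : n = 4
    · have hm1 : PebblingMove G C (mv C v w) := mv_move G hvw (by omega)
      have h2 : (mv C v w) v = 2 := by simp [mv_apply]; omega
      have hw1 : 1 ≤ (mv C v w) w := by simp [mv_apply, hne]
      obtain ⟨F, hF, hF1⟩ := finish_two hvw h2 hw1
      exact ⟨F, Relation.ReflTransGen.head hm1 hF, hF1⟩
    · have hm1 : PebblingMove G C (mv C v w) := mv_move G hvw (by omega)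
      have hval : (mv C v w) v = n - 2 := by simp [mv_apply]; omega
      obtain ⟨F, hF, hF1⟩ := ih (n - 2) (by omega) (mv C v w) hval (by omega)
      exact ⟨F, Relation.ReflTransGen.head hm1 hF, hF1⟩

/-- Simulation invariant. `real` is the actual configuration, `M` the simulated
one. Either (A) `real` has a 2-pebble reserve at `v` and a deficit of at most 2
at `x`; or (B) a reserve at `v` and a deficit of at most 1 at some `p ≠ v`;
or (C) no reserve and no deficit. -/
def Inv (v x : V) (M real : V → ℕ) : Prop :=
  (real v = M v + 2 ∧ ∀ u, u ≠ v → M u ≤ real u + (if u = x then 2 else 0)) ∨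
  (∃ p, p ≠ v ∧ real v = M v + 2 ∧ ∀ u, u ≠ v → M u ≤ real u + (if u = p then 1 else 0)) ∨
  (real v = M v ∧ ∀ u, u ≠ v → M u ≤ real u)

lemma perform {v : V} {c : ℕ} {D : V → ℕ} {M real : V → ℕ} {u w : V}
    (h1 : real v = M v + c) (hco : ∀ z, z ≠ v → M z ≤ real z + D z)
    (hne : u ≠ w) (h2 : 2 ≤ M u) (hru : 2 ≤ real u) :
    (mv real u w) v = (mv M u w) v + c ∧
      ∀ z, z ≠ v → (mv M u w) z ≤ (mv real u w) z + D z := by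
  constructor
  · by_cases hvu : v = u
    · subst hvu; simp [mv_apply]; omega
    · by_cases hvw : v = w
      · subst hvw; simp [mv_apply, hvu]; omega
      · simp [mv_apply, hvu, hvw]; omega
  · intro z hz
    have hc := hco z hz
    by_cases hzu : z = u
    · subst hzu
      have := hco z hz
      simp [mv_apply]; omega
    · by_cases hzw : z = w
      · subst hzw; simp [mv_apply, hzu]; omega
      · simp [mv_apply, hzu, hzw]; omega

lemma step {G : SimpleGraph V} {v x : V} (hxv : x ≠ v) (hxa : ¬ G.Adj x v)
    {M M' real : V → ℕ} (hm : PebblingMove G M M') (h : Inv v x M real) :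
    ∃ real', Reaches G real real' ∧ Inv v x M' real' := by
  obtain ⟨u, w, ha, h2, rfl⟩ := hm
  have huw : u ≠ w := ha.ne
  show ∃ real', Reaches G real real' ∧ Inv v x (mv M u w) real'
  rcases h with ⟨h1, hco⟩ | ⟨p, hpv, h1, hco⟩ | ⟨h1, hco⟩
  · -- state A
    by_cases hru : 2 ≤ real u
    · obtain ⟨g1, g2⟩ := perform h1 hco huw h2 hru
      exact ⟨mv real u w, Relation.ReflTransGen.single (mv_move G ha hru), Or.inl ⟨g1, g2⟩⟩
    · have huv : u ≠ v := by
        intro hh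
        rw [hh] at h2 hru
        omega
      have hux : u = x := by
        by_contra hh
        have := hco u huv
        rw [if_neg hh] at this
        omega
      have hcu : M u ≤ real u + 2 := by
        have := hco u huv
        rw [if_pos hux] at this
        exact this
      have hwv : w ≠ v := fun hh => hxa (hux ▸ hh ▸ ha)
      refine ⟨real, Relation.ReflTransGen.refl, Or.inr (Or.inl ⟨w, hwv, ?_, ?_⟩)⟩
      · have e : (mv M u w) v = M v := by simp [mv_apply, Ne.symm huv, Ne.symm hwv]
        rw [e]
        exact h1
      · intro z hz
        by_cases hzu : z = u
        · rw [hzu]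
          have e1 : (mv M u w) u = M u - 2 := by simp [mv_apply]
          rw [e1, if_neg huw]
          omega
        · by_cases hzw : z = w
          · rw [hzw]
            have e1 : (mv M u w) w = M w + 1 := by simp [mv_apply, Ne.symm huw]
            have hc : M w ≤ real w := by
              have := hco w hwv
              rw [if_neg (fun hh : w = x => huw (by rw [hux, ← hh]))] at this
              exact this
            rw [e1, if_pos rfl]
            omega
          · have e1 : (mv M u w) z = M z := by simp [mv_apply, hzu, hzw]
            have hc : M z ≤ real z := by
              have := hco z hz
              rw [if_neg (fun hh : z = x => hzu (by rw [hux, ← hh]))] at this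
              exact this
            rw [e1, if_neg hzw]
            omega
  · -- state B
    by_cases hru : 2 ≤ real u
    · obtain ⟨g1, g2⟩ := perform h1 hco huw h2 hru
      exact ⟨mv real u w, Relation.ReflTransGen.single (mv_move G ha hru),
        Or.inr (Or.inl ⟨p, hpv, g1, g2⟩)⟩
    · have huv : u ≠ v := by
        intro hh
        rw [hh] at h2 hru
        omega
      have hup : u = p := by
        by_contra hh
        have := hco u huv
        rw [if_neg hh] at this
        omega
      have hcu : M u ≤ real u + 1 := by
        have := hco u huv
        rw [if_pos hup] at this
        exact this
      have hMu : M u = 2 := by omega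
      have hru1 : real u = 1 := by omega
      by_cases hadj : G.Adj v u
      · -- refill via the reserve at v, then perform the move
        have hm1 : PebblingMove G real (mv real v u) := mv_move G hadj (by omega)
        have hvmu : (mv real v u) u = real u + 1 := by
          simp [mv_apply, huv]
        have hm2 : PebblingMove G (mv real v u) (mv (mv real v u) u w) :=
          mv_move G ha (by omega)
        refine ⟨_, (Relation.ReflTransGen.single hm1).tail hm2, Or.inr (Or.inr ⟨?_, ?_⟩)⟩
        · by_cases hwv : w = v
          · rw [hwv]
            have e1 : (mv (mv real v u) u v) v = (mv real v u) v + 1 := by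
              simp [mv_apply, Ne.symm huv]
            have e2 : (mv real v u) v = real v - 2 := by simp [mv_apply]
            have e3 : (mv M u v) v = M v + 1 := by simp [mv_apply, Ne.symm huv]
            rw [e1, e2, e3]
            omega
          · have e1 : (mv (mv real v u) u w) v = (mv real v u) v := by
              simp [mv_apply, Ne.symm huv, Ne.symm hwv]
            have e2 : (mv real v u) v = real v - 2 := by simp [mv_apply]
            have e3 : (mv M u w) v = M v := by simp [mv_apply, Ne.symm huv, Ne.symm hwv]
            rw [e1, e2, e3]
            omega
        · intro z hz
          by_cases hzu : z = u
          · rw [hzu]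
            have e1 : (mv M u w) u = M u - 2 := by simp [mv_apply]
            have e2 : (mv (mv real v u) u w) u = (mv real v u) u - 2 := by
              simp [mv_apply]
            rw [e1, e2, hvmu]
            omega
          · by_cases hzw : z = w
            · rw [hzw]
              have hwv : w ≠ v := fun hh => hz (hzw.trans hh)
              have e1 : (mv M u w) w = M w + 1 := by simp [mv_apply, Ne.symm huw]
              have e2 : (mv (mv real v u) u w) w = (mv real v u) w + 1 := by
                simp [mv_apply, Ne.symm huw]
              have e3 : (mv real v u) w = real w := by
                simp [mv_apply, hwv, Ne.symm huw]
              have hc : M w ≤ real w := by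
                have := hco w hwv
                rw [if_neg (fun hh : w = p => huw (by rw [hup, ← hh]))] at this
                exact this
              rw [e1, e2, e3]
              omega
            · have e1 : (mv M u w) z = M z := by simp [mv_apply, hzu, hzw]
              have e2 : (mv (mv real v u) u w) z = (mv real v u) z := by
                simp [mv_apply, hzu, hzw]
              have e3 : (mv real v u) z = real z := by simp [mv_apply, hz, hzu]
              have hc : M z ≤ real z := by
                have := hco z hz
                rw [if_neg (fun hh : z = p => hzu (by rw [hup, ← hh]))] at this
                exact this
              rw [e1, e2, e3]
              omega
      · -- skip the move; the deficit migrates to w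
        have hwv : w ≠ v := fun hh => hadj (hh ▸ ha).symm
        refine ⟨real, Relation.ReflTransGen.refl, Or.inr (Or.inl ⟨w, hwv, ?_, ?_⟩)⟩
        · have e : (mv M u w) v = M v := by simp [mv_apply, Ne.symm huv, Ne.symm hwv]
          rw [e]
          exact h1
        · intro z hz
          by_cases hzu : z = u
          · rw [hzu]
            have e1 : (mv M u w) u = M u - 2 := by simp [mv_apply]
            rw [e1, if_neg huw]
            omega
          · by_cases hzw : z = w
            · rw [hzw]
              have e1 : (mv M u w) w = M w + 1 := by simp [mv_apply, Ne.symm huw]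
              have hc : M w ≤ real w := by
                have := hco w hwv
                rw [if_neg (fun hh : w = p => huw (by rw [hup, ← hh]))] at this
                exact this
              rw [e1, if_pos rfl]
              omega
            · have e1 : (mv M u w) z = M z := by simp [mv_apply, hzu, hzw]
              have hc : M z ≤ real z := by
                have := hco z hz
                rw [if_neg (fun hh : z = p => hzu (by rw [hup, ← hh]))] at this
                exact this
              rw [e1, if_neg hzw]
              omega
  · -- state C
    have hru : 2 ≤ real u := by
      by_cases huv : u = v
      · rw [huv] at h2 ⊢
        omega
      · have := hco u huv
        omega
    have g := perform (c := 0) (D := fun _ => 0) (show real v = M v + 0 by omega)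
      (fun z hz => by simpa using hco z hz) huw h2 hru
    refine ⟨mv real u w, Relation.ReflTransGen.single (mv_move G ha hru),
      Or.inr (Or.inr ⟨by have := g.1; omega, fun z hz => by simpa using g.2 z hz⟩)⟩

lemma sim {G : SimpleGraph V} {v x : V} (hxv : x ≠ v) (hxa : ¬ G.Adj x v)
    {M E : V → ℕ} (h : Reaches G M E) :
    ∀ real, Inv v x M real → ∃ real', Reaches G real real' ∧ Inv v x E real' := by
  induction h using Relation.ReflTransGen.head_induction_on with
  | refl => exact fun real hr => ⟨real, Relation.ReflTransGen.refl, hr⟩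
  | head hm hrest ih =>
    intro real hr
    obtain ⟨r1, hr1, hi1⟩ := step hxv hxa hm hr
    obtain ⟨r2, hr2, hi2⟩ := ih r1 hi1
    exact ⟨r2, hr1.trans hr2, hi2⟩

end SingularAux

open SingularAux

theorem stmt10 {V : Type*} [Fintype V] (G : SimpleGraph V)
    (hcard : 3 ≤ Fintype.card V) :
    singularPebblingNumber G = pebblingNumber G := by
  have main : ∀ t : ℕ,
      (∀ C : V → ℕ, t ≤ ∑ x, C x → ∀ v : V, ∃ C', Reaches G C C' ∧ 1 ≤ C' v) →
      (∀ C : V → ℕ, t ≤ ∑ x, C x → ∀ v : V, ∃ C', Reaches G C C' ∧ C' v = 1) := by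
    intro t hP C hsum v
    -- v has a neighbor
    have hw0 : ∃ w, G.Adj v w := by
      by_contra hno
      push_neg at hno
      obtain ⟨u, hu⟩ := Fintype.exists_ne_of_one_lt_card (by omega) v
      have hs : (∑ z, (fun z => if z = u then t else 0 : V → ℕ) z) = t := by
        simp
      obtain ⟨E, hE, hE1⟩ := hP _ (le_of_eq hs.symm) v
      have hEv := iso hno hE
      simp [Ne.symm hu] at hEv
      omega
    obtain ⟨w0, hw0⟩ := hw0
    rcases Nat.lt_or_ge (C v) 2 with hlt | hge
    · -- C v = 0 or 1
      by_cases h1 : C v = 1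
      · exact ⟨C, Relation.ReflTransGen.refl, h1⟩
      · have h0 : C v = 0 := by omega
        obtain ⟨E, hE, hE1⟩ := hP C hsum v
        exact first_arrival hE hE1 h0
    · rcases Nat.lt_or_ge (C v) 3 with h2 | h3
      · have hCv : C v = 2 := by omega
        by_cases hnb : ∃ w, G.Adj v w ∧ 1 ≤ C w
        · obtain ⟨w, hw, hw1⟩ := hnb
          exact finish_two hw hCv hw1
        · push_neg at hnb
          by_cases hx : ∃ z, z ≠ v ∧ ¬ G.Adj v z
          · -- crux case
            obtain ⟨x, hxv, hxa⟩ := hx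
            have hxa' : ¬ G.Adj x v := fun h => hxa h.symm
            set Dc : V → ℕ := fun z => if z = v then 0 else if z = x then C x + 2 else C z
              with hDcdef
            have hsD : ∑ z, Dc z = ∑ z, C z := by
              have hpt : ∀ z, Dc z + (if z = v then 2 else 0) =
                  C z + (if z = x then 2 else 0) := by
                intro z
                by_cases hzv : z = v
                · subst hzv
                  simp [hDcdef, Ne.symm hxv, hCv]
                · by_cases hzx : z = x
                  · subst hzx
                    simp [hDcdef, hzv]
                  · simp [hDcdef, hzv, hzx]
              have hsum2 := Finset.sum_congr rfl (fun z (_ : z ∈ Finset.univ) => hpt z)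
              rw [Finset.sum_add_distrib, Finset.sum_add_distrib] at hsum2
              simp only [Finset.sum_ite_eq', Finset.mem_univ, if_pos] at hsum2
              omega
            obtain ⟨E0, hE0, hE0v⟩ := hP Dc (by rw [hsD]; exact hsum) v
            have hDv : Dc v = 0 := by simp [hDcdef]
            obtain ⟨E, hE, hEv⟩ := first_arrival hE0 hE0v hDv
            have hinv0 : Inv v x Dc C := by
              left
              constructor
              · simp [hDcdef, hCv]
              · intro z hz
                by_cases hzx : z = x
                · subst hzx; simp [hDcdef, hz]
                · simp [hDcdef, hz, hzx]
            obtain ⟨real', hr', hinv'⟩ := sim hxv hxa' hE C hinv0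
            have hfin : real' v = 1 ∨ real' v = 3 := by
              rcases hinv' with ⟨h1, -⟩ | ⟨p, -, h1, -⟩ | ⟨h1, -⟩ <;> omega
            rcases hfin with hfin | hfin
            · exact ⟨real', hr', hfin⟩
            · obtain ⟨F, hF, hF1⟩ := finish_odd hw0 1 real' (by omega)
              exact ⟨F, hr'.trans hF, hF1⟩
          · -- all other vertices adjacent to v; then ∑ C = 2 and t ≤ 2
            push_neg at hx
            have hzero : ∀ z, z ≠ v → C z = 0 := by
              intro z hz
              have := hnb z (hx z hz)
              omega
            have hsC : ∑ z, C z = 2 := by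
              rw [Finset.sum_eq_single v (fun b _ hb => hzero b hb) (fun h => absurd (Finset.mem_univ v) h)]
              exact hCv
            have ht2 : t ≤ 2 := by omega
            -- contradiction: two isolated single pebbles can't reach v
            have hone : 1 < (Finset.univ.erase v : Finset V).card := by
              rw [Finset.card_erase_of_mem (Finset.mem_univ v), Finset.card_univ]
              omega
            obtain ⟨u1, hu1, u2, hu2, h12⟩ := Finset.one_lt_card.mp hone
            have hu1v : u1 ≠ v := (Finset.mem_erase.mp hu1).1
            have hu2v : u2 ≠ v := (Finset.mem_erase.mp hu2).1
            set C2 : V → ℕ := fun z => if z = u1 then 1 else if z = u2 then 1 else 0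
              with hC2def
            have hsC2 : ∑ z, C2 z = 2 := by
              have : C2 = fun z => (if z = u1 then 1 else 0) + (if z = u2 then 1 else 0) := by
                funext z
                by_cases hz1 : z = u1
                · simp [hC2def, hz1, h12]
                · by_cases hz2 : z = u2 <;> simp [hC2def, hz1, hz2, Ne.symm h12]
              rw [this, Finset.sum_add_distrib]
              simp
            obtain ⟨E, hE, hE1⟩ := hP C2 (by omega) v
            have hEC : E = C2 := frozen hE (by
              intro z
              by_cases hz1 : z = u1
              · simp [hC2def, hz1]
              · by_cases hz2 : z = u2 <;> simp [hC2def, hz1, hz2])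
            rw [hEC] at hE1
            simp [hC2def, Ne.symm hu1v, Ne.symm hu2v] at hE1
      · exact finish_ge hw0 (C v) C rfl h3
  have hset : {t : ℕ | ∀ C : V → ℕ, t ≤ ∑ x, C x → ∀ v : V,
      ∃ C', Reaches G C C' ∧ C' v = 1} =
      {t : ℕ | ∀ C : V → ℕ, t ≤ ∑ x, C x → ∀ v : V,
      ∃ C', Reaches G C C' ∧ 1 ≤ C' v} := by
    ext t
    constructor
    · intro h C hC v
      obtain ⟨C', h1, h2⟩ := h C hC v
      exact ⟨C', h1, by omega⟩
    · exact main t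
  unfold singularPebblingNumber pebblingNumber
  rw [hset]
end

section
/- Let G be a connected graph and v a vertex of degree at least 2. If a configuration with two pebbles on v blocks the opponent from ever achieving exactly one pebble on v, then the modified configuration obtained by removing the two pebbles from v and placing one pebble on each neighbor of v still blocks reaching v, and uses at least as many pebbles. -/
open Classical

theorem move_lift {V : Type*} {G : SimpleGraph V} {A B : V → ℕ} (E : V → ℕ)
    (h : PebblingMove G A B) :
    PebblingMove G (fun x => A x + E x) (fun x => B x + E x) := by
  obtain ⟨u, w, hadj, hu, rfl⟩ := h
  refine ⟨u, w, hadj, by show 2 ≤ A u + E u; omega, ?_⟩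
  funext x
  by_cases hx : x = u
  · subst hx; simp; omega
  · by_cases hx2 : x = w <;> simp [hx, hx2, hadj.ne'] <;> omega

theorem reaches_lift {V : Type*} {G : SimpleGraph V} {A B : V → ℕ} (E : V → ℕ)
    (h : Reaches G A B) :
    Reaches G (fun x => A x + E x) (fun x => B x + E x) := by
  induction h with
  | refl => exact Relation.ReflTransGen.refl
  | tail _ h2 ih => exact ih.tail (move_lift E h2)

theorem stmt11 {V : Type*} [Fintype V] (G : SimpleGraph V) [DecidableRel G.Adj]
    (hconn : G.Connected) (v : V) (hdeg : 2 ≤ G.degree v)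
    (C : V → ℕ) (h2 : C v = 2)
    (hblock : ¬ ∃ C', Reaches G C C' ∧ C' v = 1) :
    (¬ ∃ C'', Reaches G
        (fun x => if x = v then 0 else if G.Adj v x then C x + 1 else C x) C'' ∧
        1 ≤ C'' v) ∧
    (∑ x, C x) ≤ ∑ x, (if x = v then 0 else if G.Adj v x then C x + 1 else C x) := by
  set D : V → ℕ := fun x => if x = v then 0 else if G.Adj v x then C x + 1 else C x with hD
  -- Step 1: neighbors of v carry no pebbles in C
  have hC0 : ∀ u, G.Adj v u → C u = 0 := by
    intro u hadj
    by_contra hne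
    apply hblock
    set C1 : V → ℕ := fun x => if x = v then C v - 2 else if x = u then C u + 1 else C x
      with hC1
    have m1 : PebblingMove G C C1 := ⟨v, u, hadj, by omega, rfl⟩
    have hC1u : C1 u = C u + 1 := by simp [hC1, hadj.ne']
    set C2 : V → ℕ := fun x => if x = u then C1 u - 2 else if x = v then C1 v + 1 else C1 x
      with hC2
    have m2 : PebblingMove G C1 C2 := ⟨u, v, hadj.symm, by rw [hC1u]; omega, rfl⟩
    have hC2v : C2 v = 1 := by simp [hC2, hC1, hadj.ne, h2]
    exact ⟨C2, (Relation.ReflTransGen.single m1).tail m2, hC2v⟩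
  set C0 : V → ℕ := fun x => if x = v then 0 else C x with hC0def
  constructor
  · rintro ⟨C'', hreach, hCv⟩
    have key : ∀ B, Reaches G D B → B v = 0 ∧ (∀ u, G.Adj v u → B u = 1) ∧
        Reaches G C0 (fun x => if G.Adj v x then 0 else B x) := by
      intro B hB
      induction hB with
      | refl =>
        refine ⟨by simp [hD], fun u hu => by simp [hD, hu.ne', hu, hC0 u hu], ?_⟩
        have heq : (fun x => if G.Adj v x then 0 else D x) = C0 := by
          funext x
          by_cases hax : G.Adj v x
          · simp [hax, hC0def, hax.ne', hC0 x hax]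
          · by_cases hxv : x = v <;> simp [hax, hxv, hD, hC0def]
        rw [heq]; exact Relation.ReflTransGen.refl
      | @tail b c h1 h2 ih =>
        obtain ⟨hv0, hnb, hch⟩ := ih
        obtain ⟨s, t, hst, hs2, rfl⟩ := h2
        have hsv : s ≠ v := by rintro rfl; omega
        have hsadj : ¬ G.Adj v s := fun h => by have := hnb s h; omega
        have htv : t ≠ v := by rintro rfl; exact hsadj hst.symm
        by_cases hta : G.Adj v t
        · -- impossible: would let C reach a pebble on v
          exfalso
          apply hblock
          have hts : t ≠ s := fun h => hsadj (h ▸ hta)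
          set E : V → ℕ := fun x => if x = t then 1 else 0 with hE
          set Bbar : V → ℕ := fun x => if G.Adj v x then 0 else b x with hBbar
          set F : V → ℕ := fun x => Bbar x + E x with hF
          have lifted : Reaches G (fun x => C0 x + E x) F := reaches_lift E hch
          set E1 : V → ℕ := fun x => if x = v then C v - 2 else if x = t then C t + 1 else C x
            with hE1
          have m1 : PebblingMove G C E1 := ⟨v, t, hta, by omega, rfl⟩
          have hE1eq : E1 = fun x => C0 x + E x := by
            funext x
            by_cases hxv : x = v
            · subst hxv; simp [hE1, hC0def, hE, Ne.symm htv, h2]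
            · by_cases hxt : x = t
              · subst hxt; simp [hE1, hxv, hC0def, hE, hC0 x hta]
              · simp [hE1, hxv, hxt, hC0def, hE]
          have lifted' : Reaches G E1 F := by rw [hE1eq]; exact lifted
          have hFs : 2 ≤ F s := by
            have : F s = b s + E s := by simp [hF, hBbar, hsadj]
            omega
          have hFt : F t = 1 := by simp [hF, hBbar, hta, hE]
          have hFv : F v = 0 := by simp [hF, hBbar, G.irrefl, hv0, hE, Ne.symm htv]
          set F2 : V → ℕ := fun x => if x = s then F s - 2 else if x = t then F t + 1 else F x
            with hF2
          have m2 : PebblingMove G F F2 := ⟨s, t, hst, hFs, rfl⟩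
          have hF2t : F2 t = 2 := by simp [hF2, hts, hFt]
          have hF2v : F2 v = 0 := by simp [hF2, Ne.symm hsv, Ne.symm htv, hFv]
          set F3 : V → ℕ := fun x => if x = t then F2 t - 2 else if x = v then F2 v + 1 else F2 x
            with hF3
          have m3 : PebblingMove G F2 F3 := ⟨t, v, hta.symm, by omega, rfl⟩
          have hF3v : F3 v = 1 := by simp [hF3, Ne.symm htv, hF2v]
          exact ⟨F3, ((Relation.ReflTransGen.head m1 lifted').tail m2).tail m3, hF3v⟩
        · -- the move avoids v and its neighborhood
          refine ⟨by simp [Ne.symm hsv, Ne.symm htv, hv0], ?_, ?_⟩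
          · intro u hu
            have h1 : u ≠ s := fun h => hsadj (h ▸ hu)
            have h1' : u ≠ t := fun h => hta (h ▸ hu)
            simp [h1, h1', hnb u hu]
          · refine hch.tail ⟨s, t, hst, by simp [hsadj]; omega, ?_⟩
            funext x
            by_cases hax : G.Adj v x
            · have hxs : x ≠ s := fun h => hsadj (h ▸ hax)
              have hxt : x ≠ t := fun h => hta (h ▸ hax)
              simp [hax, hxs, hxt]
            · by_cases hxs : x = s
              · subst hxs; simp [hax, hsadj]
              · by_cases hxt : x = t
                · subst hxt; simp [hax, hta, hxs]
                · simp [hax, hxs, hxt]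
    have := (key C'' hreach).1
    omega
  · -- sum comparison
    rw [← Finset.add_sum_erase Finset.univ C (Finset.mem_univ v),
        ← Finset.add_sum_erase Finset.univ D (Finset.mem_univ v)]
    have hDv : D v = 0 := by simp [hD]
    have hsum : ∑ x ∈ Finset.univ.erase v, D x
        = (∑ x ∈ Finset.univ.erase v, C x) + ∑ x ∈ Finset.univ.erase v,
            (if G.Adj v x then 1 else 0) := by
      rw [← Finset.sum_add_distrib]
      apply Finset.sum_congr rfl
      intro x hx
      have hxv : x ≠ v := (Finset.mem_erase.mp hx).1
      simp only [hD, hxv, if_false]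
      split_ifs <;> omega
    have hdeg' : ∑ x ∈ Finset.univ.erase v, (if G.Adj v x then 1 else 0) = G.degree v := by
      rw [Finset.sum_erase _ (by simp [G.irrefl])]
      rw [SimpleGraph.degree, SimpleGraph.neighborFinset_eq_filter, Finset.card_filter]
    rw [hsum, hdeg', hDv, h2]
    omega
end
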